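/- arXiv:2003.11286 — 3 statements merged into one kernel-verified Lean document; each statement's English description precedes it below -/
import Mathlib

section
/- Let K be a field, let W : ℤ² → K be an elliptic net, and let c ∈ K be nonzero. Then the modified map W⁽¹⁾ : ℤ² → K defined by W⁽¹⁾(u,v) = c^{uv}·W(u,v) (with c^{uv} the integer power of c, uv ∈ ℤ possibly negative) is again an elliptic net, i.e. it satisfies the same four-term recurrence. -/
/-- An elliptic net of rank 2: a map `W : ℤ² → K` satisfying the four-term recurrence. -/
def IsEllipticNetRank2 {K : Type*} [CommRing K] (W : ℤ × ℤ → K) : Prop :=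
  ∀ p q r s : ℤ × ℤ,
    W (p + q + s) * W (p - q) * W (r + s) * W r +
      W (q + r + s) * W (q - r) * W (p + s) * W p +
        W (r + p + s) * W (r - p) * W (q + s) * W q = 0

/-!
Each of the three terms of the recurrence for `u ↦ c ^ Q u * W u`, `Q` a quadratic form,
is the corresponding term for `W` times `c ^ e`, where the exponent
`e = Q (p + q + s) + Q (p - q) + Q (r + s) + Q r = 2 (Q p + Q q + Q r + Q s) + B (p + q + r, s)`
(`B` the polar form of `Q`) is symmetric in `p, q, r`. Hence the recurrence for the modified map
is `c ^ e` times the recurrence for `W`.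
-/

namespace QuadraticMap

variable {R M N : Type*} [CommRing R] [AddCommGroup M] [Module R M] [AddCommGroup N]
  [Module R N]

theorem map_add_add_add_map_sub_add_map_add_add_map (Q : QuadraticMap R M N) (p q r s : M) :
    Q (p + q + s) + Q (p - q) + Q (r + s) + Q r =
      (2 : ℤ) • (Q p + Q q + Q r + Q s) + polar Q (p + q + r) s := by
  simp only [QuadraticMap.map_add Q, sub_eq_add_neg, Q.map_neg, polar_add_left, polar_neg_right]
  abel

end QuadraticMap

namespace IsEllipticNetRank2

variable {K : Type*}

theorem mul_of_cyclic [CommRing K] {W : ℤ × ℤ → K} (hW : IsEllipticNetRank2 W)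
    (w : ℤ × ℤ → K)
    (hw : ∀ p q r s, w (p + q + s) * w (p - q) * w (r + s) * w r =
      w (q + r + s) * w (q - r) * w (p + s) * w p) :
    IsEllipticNetRank2 (fun u => w u * W u) := by
  intro p q r s
  linear_combination w (p + q + s) * w (p - q) * w (r + s) * w r * hW p q r s -
    (W (q + r + s) * W (q - r) * W (p + s) * W p + W (r + p + s) * W (r - p) * W (q + s) * W q) *
      hw p q r s - W (r + p + s) * W (r - p) * W (q + s) * W q * hw q r p s

theorem zpow_quadraticMap_mul [Field K] {W : ℤ × ℤ → K} (hW : IsEllipticNetRank2 W) {c : K}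
    (hc : c ≠ 0) (Q : QuadraticMap ℤ (ℤ × ℤ) ℤ) :
    IsEllipticNetRank2 (fun u => c ^ Q u * W u) := by
  refine hW.mul_of_cyclic _ fun p q r s => ?_
  simp only [← zpow_add₀ hc, Q.map_add_add_add_map_sub_add_map_add_add_map]
  congr 1
  rw [show q + r + p = p + q + r by abel]
  abel

end IsEllipticNetRank2

theorem ellipticNet_modified {K : Type*} [Field K]
    (W : ℤ × ℤ → K) (hW : IsEllipticNetRank2 W) (c : K) (hc : c ≠ 0) :
    IsEllipticNetRank2 (fun uv : ℤ × ℤ => c ^ (uv.1 * uv.2) * W uv) :=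
  hW.zpow_quadraticMap_mul hc (.linMulLin (.fst ℤ ℤ ℤ) (.snd ℤ ℤ ℤ))
end

section
/- Let K be a field, let W : ℤ² → K be an elliptic net, let θ ∈ K be nonzero, and let a, b, c, d ∈ ℤ. Then the map W' : ℤ² → K defined by W'(u,v) = θ^{a·u² + b·uv + c·v² + d}·W(u,v) (integer powers of θ, possibly negative) is again an elliptic net, i.e. it satisfies the same four-term recurrence. -/
/-!
Multiplying a net by `χ` scales the three terms of the recurrence by
`χ(p+q+s) χ(p-q) χ(r+s) χ(r)` and its two cyclic shifts in `(p, q, r)`; when these three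
factors agree, the recurrence survives. For `χ = θ ^ f` with `f = Q + d` and `Q` a binary
quadratic form with bilinear form `B`, the exponent of the factor is
`2 (Q p + Q q + Q r + Q s) + B (p + q + r, s) + 4 d`, which is symmetric in `p, q, r`.
-/

/-- An elliptic net of rank 2: a map `W : ℤ² → K` satisfying the four-term recurrence. -/
def IsEllipticNetRankTwo {K : Type*} [CommRing K] (W : ℤ × ℤ → K) : Prop :=
  ∀ p q r s : ℤ × ℤ,
    W (p + q + s) * W (p - q) * W (r + s) * W r +
      W (q + r + s) * W (q - r) * W (p + s) * W p +
        W (r + p + s) * W (r - p) * W (q + s) * W q = 0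

def IsEllipticNetGauge {K : Type*} [CommRing K] (χ : ℤ × ℤ → K) : Prop :=
  ∀ p q r s : ℤ × ℤ,
    χ (q + r + s) * χ (q - r) * χ (p + s) * χ p = χ (p + q + s) * χ (p - q) * χ (r + s) * χ r

theorem IsEllipticNetRankTwo.mul_gauge {K : Type*} [CommRing K] {W χ : ℤ × ℤ → K}
    (hW : IsEllipticNetRankTwo W) (hχ : IsEllipticNetGauge χ) :
    IsEllipticNetRankTwo (fun x => χ x * W x) := by
  intro p q r s
  have h₁ := hχ p q r s
  have h₂ := (hχ q r p s).trans h₁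
  calc _ = χ (p + q + s) * χ (p - q) * χ (r + s) * χ r *
        (W (p + q + s) * W (p - q) * W (r + s) * W r +
          W (q + r + s) * W (q - r) * W (p + s) * W p +
            W (r + p + s) * W (r - p) * W (q + s) * W q) := by
        linear_combination W (q + r + s) * W (q - r) * W (p + s) * W p * h₁ +
          W (r + p + s) * W (r - p) * W (q + s) * W q * h₂
    _ = 0 := by rw [hW p q r s, mul_zero]

theorem isEllipticNetGauge_zpow_quadratic {K : Type*} [Field K] {θ : K} (hθ : θ ≠ 0)
    (a b c d : ℤ) :
    IsEllipticNetGauge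
      (fun uv : ℤ × ℤ => θ ^ (a * uv.1 ^ 2 + b * uv.1 * uv.2 + c * uv.2 ^ 2 + d)) := by
  intro p q r s
  simp only [← zpow_add₀ hθ, Prod.fst_add, Prod.snd_add, Prod.fst_sub, Prod.snd_sub]
  congr 1
  ring

theorem ellipticNet_scale_quadratic {K : Type*} [Field K]
    (W : ℤ × ℤ → K) (hW : IsEllipticNetRankTwo W) (θ : K) (hθ : θ ≠ 0)
    (a b c d : ℤ) :
    IsEllipticNetRankTwo (fun uv : ℤ × ℤ =>
      θ ^ (a * uv.1 ^ 2 + b * uv.1 * uv.2 + c * uv.2 ^ 2 + d) * W uv) :=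
  hW.mul_gauge (isEllipticNetGauge_zpow_quadratic hθ a b c d)
end

section
/- Let K be a field, let W̃ : ℤ² → K be an elliptic net, and let θ ∈ K be nonzero. Define W : ℤ² → K by W(n,m) = θ^{nm − n² − m² + 1}·W̃(n,m) (integer powers of θ, possibly negative). Then W is an elliptic net, and it satisfies W(n,0) = θ^{1−n²}·W̃(n,0) and W(n,1) = θ^{n−n²}·W̃(n,1) for all n ∈ ℤ. -/
/-!
Multiplying an elliptic net by `θ ^ e v` multiplies the three terms of the recurrence by `θ` to
the exponent sums `e (p+q+s) + e (p-q) + e (r+s) + e r` and its cyclic permutations in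
`(p, q, r)`. For `e = Q + d` with `Q` a quadratic form with polar `B`, this sum is
`2 (Q p + Q q + Q r + Q s) + B (p+q+r) s + 4 d`, which is symmetric in `p, q, r`; so all three
terms pick up the same factor and the recurrence survives.
-/

def IsTwistExponent (e : ℤ × ℤ → ℤ) : Prop :=
  ∀ p q r s : ℤ × ℤ,
    e (p + q + s) + e (p - q) + e (r + s) + e r = e (q + r + s) + e (q - r) + e (p + s) + e p

theorem isTwistExponent_quadratic (a b c d : ℤ) :
    IsTwistExponent fun v => a * v.1 ^ 2 + b * v.1 * v.2 + c * v.2 ^ 2 + d := by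
  rintro ⟨p₁, p₂⟩ ⟨q₁, q₂⟩ ⟨r₁, r₂⟩ ⟨s₁, s₂⟩
  simp only [Prod.mk_add_mk, Prod.mk_sub_mk]
  ring

theorem IsEllipticNetRankTwo.zpow_mul {K : Type*} [Field K] {W : ℤ × ℤ → K}
    (hW : IsEllipticNetRankTwo W) {θ : K} (hθ : θ ≠ 0) {e : ℤ × ℤ → ℤ}
    (he : IsTwistExponent e) :
    IsEllipticNetRankTwo fun v => θ ^ e v * W v := by
  have scale : ∀ u₁ u₂ u₃ u₄ : ℤ × ℤ,
      θ ^ e u₁ * W u₁ * (θ ^ e u₂ * W u₂) * (θ ^ e u₃ * W u₃) * (θ ^ e u₄ * W u₄) =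
        θ ^ (e u₁ + e u₂ + e u₃ + e u₄) * (W u₁ * W u₂ * W u₃ * W u₄) := by
    intros
    simp only [zpow_add₀ hθ]
    ring
  intro p q r s
  simp only [scale, ← he p q r s, ← he q r p s, ← mul_add, hW p q r s, mul_zero]

theorem ellipticNet_twist {K : Type*} [Field K]
    (Wt : ℤ × ℤ → K) (hWt : IsEllipticNetRankTwo Wt) (θ : K) (hθ : θ ≠ 0)
    (W : ℤ × ℤ → K)
    (hW : ∀ n m : ℤ, W (n, m) = θ ^ (n * m - n ^ 2 - m ^ 2 + 1) * Wt (n, m)) :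
    IsEllipticNetRankTwo W ∧
      (∀ n : ℤ, W (n, 0) = θ ^ (1 - n ^ 2) * Wt (n, 0)) ∧
        (∀ n : ℤ, W (n, 1) = θ ^ (n - n ^ 2) * Wt (n, 1)) := by
  have hW_eq : W = fun v => θ ^ ((-1) * v.1 ^ 2 + 1 * v.1 * v.2 + (-1) * v.2 ^ 2 + 1) * Wt v := by
    funext ⟨n, m⟩
    rw [hW]
    ring_nf
  refine ⟨?_, fun n => by rw [hW]; ring_nf, fun n => by rw [hW]; ring_nf⟩
  rw [hW_eq]
  exact hWt.zpow_mul hθ (isTwistExponent_quadratic (-1) 1 (-1) 1)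
end
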